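/- Let θ(t) = (u(t), V(t)) ∈ ℝʳ × ℝ^{m×r} satisfy a gradient flow of any C¹ function of the form E(u, V) = F((uᵢ‖vᵢ‖, vᵢ/‖vᵢ‖)_{i=1}^r) on the open set where all vᵢ ≠ 0. Then for each i, t ↦ uᵢ(t)² − ‖vᵢ(t)‖² is constant along the flow. -/

import Mathlib

/-- Identification of a plain function with an element of Euclidean space. -/
def toE16 {ι : Type*} [Fintype ι] (f : ι → ℝ) : EuclideanSpace ℝ ι := WithLp.toLp 2 f

/-- `‖vᵢ‖`, the norm of the `i`-th column of `V`, for a parameter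
`θ = (u, V) ∈ ℝʳ × ℝ^{m×r}` encoded in `ℝ^{r + mr}`. -/
noncomputable def vnorm16 (m r : ℕ) (θ : EuclideanSpace ℝ (Fin r ⊕ Fin m × Fin r))
    (i : Fin r) : ℝ :=
  Real.sqrt (∑ a : Fin m, θ (Sum.inr (a, i)) ^ 2)

/-- The reparametrization `φ(u,V) = (uᵢ‖vᵢ‖, vᵢ/‖vᵢ‖)_{i=1}^r`. -/
noncomputable def phi16 (m r : ℕ) (θ : EuclideanSpace ℝ (Fin r ⊕ Fin m × Fin r)) :
    EuclideanSpace ℝ (Fin r ⊕ Fin m × Fin r) :=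
  toE16 fun x =>
    match x with
    | Sum.inl i => θ (Sum.inl i) * vnorm16 m r θ i
    | Sum.inr (a, i) => θ (Sum.inr (a, i)) / vnorm16 m r θ i

/-! Each `ψ(uⱼ, vⱼ) = (uⱼ‖vⱼ‖, vⱼ/‖vⱼ‖)` is invariant under the rescaling
`(uⱼ, vⱼ) ↦ (e^{s cⱼ} uⱼ, e^{-s cⱼ} vⱼ)`, so `E = F ∘ φ` is constant along these one-parameter
groups and its differential vanishes on their generators `(cⱼuⱼ, -cⱼvⱼ)ⱼ`. For `c = eᵢ` the
generator is half the gradient of `hᵢ = uᵢ² - ‖vᵢ‖²`, hence `⟨∇hᵢ, ∇E⟩ = 0` and `hᵢ` is conserved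
along the gradient flow. -/

open Real

theorem fderiv_apply_eq_zero_of_forall_comp_eq {E F : Type*} [NormedAddCommGroup E]
    [NormedSpace ℝ E] [NormedAddCommGroup F] [NormedSpace ℝ F] {f : E → F} {γ : ℝ → E}
    {x v : E} (hγ : HasDerivAt γ v 0) (hγ₀ : γ 0 = x) (hf : ∀ s, f (γ s) = f x) :
    fderiv ℝ f x v = 0 := by
  subst hγ₀
  by_cases hfx : DifferentiableAt ℝ f (γ 0)
  · have hcomp := hfx.hasFDerivAt.comp_hasDerivAt 0 hγ
    rw [show f ∘ γ = fun _ => f (γ 0) from funext hf] at hcomp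
    exact hcomp.unique (hasDerivAt_const 0 _)
  · rw [fderiv_zero_of_not_differentiableAt hfx, zero_apply]

theorem apply_eq_apply_of_hasDerivAt_neg_gradient {H : Type*} [NormedAddCommGroup H]
    [InnerProductSpace ℝ H] [CompleteSpace H] {E h : H → ℝ} {g : H → H}
    (hh : ∀ w, HasGradientAt h (g w) w) (hE : ∀ w, fderiv ℝ E w (g w) = 0) {θ : ℝ → H}
    (hθ : ∀ t, HasDerivAt θ (-gradient E (θ t)) t) (t s : ℝ) : h (θ t) = h (θ s) := by
  have hderiv : ∀ t, HasDerivAt (h ∘ θ) 0 t := fun t => by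
    have hcomp := (hh (θ t)).hasFDerivAt.comp_hasDerivAt t (hθ t)
    rwa [InnerProductSpace.toDual_apply_apply, inner_neg_right, real_inner_comm,
      inner_gradient_left, hE, neg_zero] at hcomp
  exact is_const_of_deriv_eq_zero (fun t => (hderiv t).differentiableAt)
    (fun t => (hderiv t).deriv) t s

section ExpScale

variable {ι : Type*}

noncomputable def expScale (σ : ι → ℝ) (s : ℝ) (w : EuclideanSpace ℝ ι) :
    EuclideanSpace ℝ ι :=
  WithLp.toLp 2 fun x => exp (s * σ x) * w x

@[simp] lemma expScale_apply (σ : ι → ℝ) (s : ℝ) (w : EuclideanSpace ℝ ι) (x : ι) :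
    expScale σ s w x = exp (s * σ x) * w x := rfl

lemma expScale_zero (σ : ι → ℝ) (w : EuclideanSpace ℝ ι) : expScale σ 0 w = w := by
  ext x; simp

lemma hasDerivAt_expScale [Fintype ι] (σ : ι → ℝ) (w : EuclideanSpace ℝ ι) :
    HasDerivAt (fun s => expScale σ s w) (WithLp.toLp 2 fun x => σ x * w x) 0 := by
  have hcoord : HasDerivAt (fun s (x : ι) => exp (s * σ x) * w x) (fun x => σ x * w x) 0 :=
    hasDerivAt_pi.2 fun x => by
      simpa using ((hasDerivAt_id (0 : ℝ)).mul_const (σ x)).exp.mul_const (w x)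
  exact (PiLp.hasFDerivAt_toLp (𝕜 := ℝ) 2 _).comp_hasDerivAt (0 : ℝ) hcoord

lemma hasGradientAt_sum_mul_sq [Fintype ι] (σ : ι → ℝ) (w : EuclideanSpace ℝ ι) :
    HasGradientAt (fun w : EuclideanSpace ℝ ι => ∑ x, σ x * w x ^ 2)
      (2 • WithLp.toLp 2 fun x => σ x * w x) w := by
  rw [hasGradientAt_iff_hasFDerivAt]
  have hx (x : ι) := ((PiLp.hasFDerivAt_apply (𝕜 := ℝ) 2 w x).pow 2).const_mul (σ x)
  refine (HasFDerivAt.fun_sum (u := Finset.univ) fun x _ => hx x).congr_fderiv ?_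
  ext v
  simp only [Nat.add_one_sub_one, pow_one, nsmul_eq_mul, Nat.cast_ofNat, sum_apply, smul_apply,
    PiLp.proj_apply, smul_eq_mul, map_nsmul, InnerProductSpace.toDual_apply_apply,
    PiLp.inner_apply, RCLike.inner_apply, ringHom_apply, Finset.mul_sum]
  exact Finset.sum_congr rfl fun x _ => by ring

end ExpScale

section Reparametrization

variable {m r : ℕ}

def rescalingWeight (c : Fin r → ℝ) : Fin r ⊕ Fin m × Fin r → ℝ :=
  Sum.elim c fun p => -c p.2

lemma vnorm16_expScale (c : Fin r → ℝ) (s : ℝ) (w : EuclideanSpace ℝ (Fin r ⊕ Fin m × Fin r))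
    (j : Fin r) :
    vnorm16 m r (expScale (rescalingWeight c) s w) j = exp (-(s * c j)) * vnorm16 m r w j := by
  simp only [vnorm16, expScale_apply, rescalingWeight, Sum.elim_inr, mul_neg, mul_pow,
    ← Finset.mul_sum]
  rw [Real.sqrt_mul' _ (Finset.sum_nonneg fun _ _ => sq_nonneg _), Real.sqrt_sq (exp_pos _).le]

lemma phi16_expScale (c : Fin r → ℝ) (s : ℝ) (w : EuclideanSpace ℝ (Fin r ⊕ Fin m × Fin r)) :
    phi16 m r (expScale (rescalingWeight c) s w) = phi16 m r w := by
  ext (j | ⟨a, j⟩) <;> simp only [phi16, toE16, vnorm16_expScale, expScale_apply] <;>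
    simp only [rescalingWeight, Sum.elim_inl, Sum.elim_inr, mul_neg]
  · rw [mul_mul_mul_comm, ← exp_add, add_neg_cancel, exp_zero, one_mul]
  · rw [mul_div_mul_left _ _ (exp_pos _).ne']

lemma sum_rescalingWeight_single_mul_sq (i : Fin r)
    (w : EuclideanSpace ℝ (Fin r ⊕ Fin m × Fin r)) :
    ∑ x, rescalingWeight (Pi.single i 1) x * w x ^ 2
      = w (Sum.inl i) ^ 2 - ∑ a : Fin m, w (Sum.inr (a, i)) ^ 2 := by
  simp [rescalingWeight, Fintype.sum_sum_type, Fintype.sum_prod_type, Pi.single_apply,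
    sub_eq_add_neg]

end Reparametrization

theorem stmt16_general (m r : ℕ) (F : EuclideanSpace ℝ (Fin r ⊕ Fin m × Fin r) → ℝ)
    (θ : ℝ → EuclideanSpace ℝ (Fin r ⊕ Fin m × Fin r))
    (hflow : ∀ t, HasDerivAt θ (-gradient (fun w => F (phi16 m r w)) (θ t)) t) :
    ∀ (i : Fin r) (t s : ℝ),
      θ t (Sum.inl i) ^ 2 - ∑ a : Fin m, θ t (Sum.inr (a, i)) ^ 2
        = θ s (Sum.inl i) ^ 2 - ∑ a : Fin m, θ s (Sum.inr (a, i)) ^ 2 := by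
  intro i t s
  let σ := rescalingWeight (m := m) (Pi.single i 1)
  have hE (w : EuclideanSpace ℝ (Fin r ⊕ Fin m × Fin r)) :
      fderiv ℝ (fun w => F (phi16 m r w)) w (2 • WithLp.toLp 2 fun x => σ x * w x) = 0 := by
    rw [map_nsmul, fderiv_apply_eq_zero_of_forall_comp_eq (hasDerivAt_expScale σ w)
      (expScale_zero σ w) fun s => by rw [phi16_expScale], smul_zero]
  have hconst := apply_eq_apply_of_hasDerivAt_neg_gradient
    (hasGradientAt_sum_mul_sq σ) hE hflow t s
  rwa [sum_rescalingWeight_single_mul_sq, sum_rescalingWeight_single_mul_sq] at hconst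

/-- along any gradient flow of a C¹ cost of the form
`E(u,V) = F((uᵢ‖vᵢ‖, vᵢ/‖vᵢ‖)ᵢ)` (on the set where all `vᵢ ≠ 0`), each quantity
`uᵢ² - ‖vᵢ‖²` is constant in time. -/
theorem stmt16 (m r : ℕ) (F : EuclideanSpace ℝ (Fin r ⊕ Fin m × Fin r) → ℝ)
    (hF : ContDiff ℝ 1 F)
    (θ : ℝ → EuclideanSpace ℝ (Fin r ⊕ Fin m × Fin r))
    (hdom : ∀ t (i : Fin r), ∃ a, θ t (Sum.inr (a, i)) ≠ 0)
    (hflow : ∀ t, HasDerivAt θ (-gradient (fun w => F (phi16 m r w)) (θ t)) t) :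
    ∀ (i : Fin r) (t s : ℝ),
      θ t (Sum.inl i) ^ 2 - ∑ a : Fin m, θ t (Sum.inr (a, i)) ^ 2
        = θ s (Sum.inl i) ^ 2 - ∑ a : Fin m, θ s (Sum.inr (a, i)) ^ 2 :=
  stmt16_general m r F θ hflow
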